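/- Under the hypotheses of the first-order PP theorem (admissible cell averages, sufficiently large viscosity parameters, CFL condition λ₁ + λ₂ ≤ 1), the updated density satisfies ρ̄_{ij}^{n+1} > (1 - λ₁ - λ₂) ρ̄_{ij}ⁿ ≥ 0, since the first component of the Godunov–Powell source S(U) is zero and the convex-combination terms Ξ₁, Ξ₂ have positive first components. -/
import Mathlib


noncomputable section

/-- MHD state space: U = (ρ, m, B, E) ∈ ℝ × ℝ³ × ℝ³ × ℝ. -/
abbrev MHDSt := ℝ × (Fin 3 → ℝ) × (Fin 3 → ℝ) × ℝ

/-- Squared Euclidean norm on ℝ³. -/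
def nsq (a : Fin 3 → ℝ) : ℝ := ∑ i, (a i) ^ 2

/-- Dot product on ℝ³. -/
def dot3 (a b : Fin 3 → ℝ) : ℝ := ∑ i, a i * b i

/-- Velocity v = m/ρ. -/
def vel (U : MHDSt) : Fin 3 → ℝ := fun j => U.2.1 j / U.1

/-- Internal energy ρe = E - (|m|²/ρ + |B|²)/2. -/
def intE (U : MHDSt) : ℝ := U.2.2.2 - (nsq U.2.1 / U.1 + nsq U.2.2.1) / 2

/-- Ideal MHD flux F_i(U) (gamma-law EOS, p = (γ-1)·ρe);
its first component is ρ v_i = m_i. -/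
def Flux (γ : ℝ) (i : Fin 3) (U : MHDSt) : MHDSt :=
  (U.2.1 i,
   fun j => U.2.1 i * vel U j - U.2.2.1 i * U.2.2.1 j
     + ((γ - 1) * intE U + nsq U.2.2.1 / 2) * (if j = i then 1 else 0),
   fun j => vel U i * U.2.2.1 j - U.2.2.1 i * vel U j,
   vel U i * (U.2.2.2 + (γ - 1) * intE U + nsq U.2.2.1 / 2)
     - U.2.2.1 i * dot3 (vel U) U.2.2.1)

/-- Godunov–Powell source vector S(U) = (0, B, v, v·B); its first component is 0. -/
def Src (U : MHDSt) : MHDSt := (0, U.2.2.1, vel U, dot3 (vel U) U.2.2.1)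

/-- in the scheme Ū^{n+1} = λ₁Ξ₁ + λ₂Ξ₂ + (1-λ)Ūⁿ - Δt(div B̄)S(Ūⁿ),
the updated density satisfies ρ̄^{n+1} > (1 - λ₁ - λ₂)ρ̄ⁿ ≥ 0, since the source has
zero first component and the Ξ terms have positive first components. -/

lemma aux_pos (ρ m α : ℝ) (hρ : 0 < ρ) (h : |m / ρ| < α) :
    0 < ρ - α⁻¹ * m ∧ 0 < ρ + α⁻¹ * m := by
  have hα : 0 < α := lt_of_le_of_lt (abs_nonneg _) h
  have h2 : |m| < α * ρ := by
    rw [abs_div, abs_of_pos hρ, div_lt_iff₀ hρ] at h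
    exact h
  have h3 : -(α * ρ) < m := neg_lt_of_abs_lt h2
  have h4 : m < α * ρ := lt_of_abs_lt h2
  have hαi : 0 < α⁻¹ := inv_pos.mpr hα
  constructor
  · nlinarith [mul_lt_mul_of_pos_left h4 hαi, inv_mul_cancel₀ hα.ne']
  · nlinarith [mul_lt_mul_of_pos_left h3 hαi, inv_mul_cancel₀ hα.ne']

theorem first_order_density_positive (γ : ℝ)
    (lam₁ lam₂ α₁ α₂ c : ℝ) (hl₁ : 0 < lam₁) (hl₂ : 0 < lam₂)
    (hlam : lam₁ + lam₂ ≤ 1)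
    (UE UW UN US U0 : MHDSt)
    (hρE : 0 < UE.1) (hρW : 0 < UW.1) (hρN : 0 < UN.1) (hρS : 0 < US.1)
    (hρ0 : 0 < U0.1)
    (hα₁E : |vel UE 0| < α₁) (hα₁W : |vel UW 0| < α₁)
    (hα₂N : |vel UN 1| < α₂) (hα₂S : |vel US 1| < α₂) :
    (1 - (lam₁ + lam₂)) * U0.1 <
      (lam₁ • ((1/2 : ℝ) • (UE - α₁⁻¹ • Flux γ 0 UE + UW + α₁⁻¹ • Flux γ 0 UW))
        + lam₂ • ((1/2 : ℝ) • (UN - α₂⁻¹ • Flux γ 1 UN + US + α₂⁻¹ • Flux γ 1 US))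
        + (1 - (lam₁ + lam₂)) • U0 - c • Src U0).1 ∧
    0 ≤ (1 - (lam₁ + lam₂)) * U0.1 := by
  have hE := aux_pos UE.1 (UE.2.1 0) α₁ hρE hα₁E
  have hW := aux_pos UW.1 (UW.2.1 0) α₁ hρW hα₁W
  have hN := aux_pos UN.1 (UN.2.1 1) α₂ hρN hα₂N
  have hS := aux_pos US.1 (US.2.1 1) α₂ hρS hα₂S
  have h1 : (1 : ℝ) - (lam₁ + lam₂) ≥ 0 := by linarith
  refine ⟨?_, mul_nonneg h1 hρ0.le⟩
  simp only [Prod.fst_add, Prod.fst_sub, Prod.smul_fst, Flux, Src, smul_eq_mul]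
  nlinarith [hE.1, hE.2, hW.1, hW.2, hN.1, hN.2, hS.1, hS.2, mul_pos hl₁ (add_pos hE.1 hW.2), mul_pos hl₂ (add_pos hN.1 hS.2)]


end
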